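/- arXiv:2307.14716 — 5 statements merged into one kernel-verified Lean document; each statement's English description precedes it below -/
import Mathlib

section
/- Let (x,y,θ) : I → ℝ³ be a solution of x' = cos θ, y' = sin θ, θ' = −y cos θ sin²θ / (1+y²) defined on an interval I, with θ nonconstant. Then θ(t) ≠ kπ/2 for all t ∈ I and all integers k. -/
/-!
At an angle `θ = kπ/2` the factor `cos θ · sin² θ` of the angle equation vanishes, so the
constant angle `kπ/2` solves the `θ`-equation for any given `y`. Since
`|y| / (1 + y²) ≤ 1/2`, the right-hand side is Lipschitz in `θ` uniformly in `y`, and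
uniqueness for the initial value problem forces a solution that reaches `kπ/2` to be constant.
-/

open Real Set

theorem ODE_solution_unique_of_ordConnected {E : Type*} [NormedAddCommGroup E] [NormedSpace ℝ E]
    {v : ℝ → E → E} {K : NNReal} {f g : ℝ → E} {s : Set ℝ} {t₀ : ℝ} (hs : s.OrdConnected)
    (hv : ∀ t ∈ s, LipschitzWith K (v t))
    (hf : ∀ t ∈ s, HasDerivAt f (v t (f t)) t) (hg : ∀ t ∈ s, HasDerivAt g (v t (g t)) t)
    (ht₀ : t₀ ∈ s) (heq : f t₀ = g t₀) : EqOn f g s := by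
  intro t ht
  rcases le_total t₀ t with hle | hle
  · have hsub : Icc t₀ t ⊆ s := hs.out ht₀ ht
    exact ODE_solution_unique_of_mem_Icc_right (s := fun _ => univ)
      (fun u hu => (hv u (hsub (Ico_subset_Icc_self hu))).lipschitzOnWith)
      (fun u hu => (hf u (hsub hu)).continuousAt.continuousWithinAt)
      (fun u hu => (hf u (hsub (Ico_subset_Icc_self hu))).hasDerivWithinAt) (fun _ _ => trivial)
      (fun u hu => (hg u (hsub hu)).continuousAt.continuousWithinAt)
      (fun u hu => (hg u (hsub (Ico_subset_Icc_self hu))).hasDerivWithinAt) (fun _ _ => trivial)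
      heq (right_mem_Icc.2 hle)
  · have hsub : Icc t t₀ ⊆ s := hs.out ht ht₀
    exact ODE_solution_unique_of_mem_Icc_left (s := fun _ => univ)
      (fun u hu => (hv u (hsub (Ioc_subset_Icc_self hu))).lipschitzOnWith)
      (fun u hu => (hf u (hsub hu)).continuousAt.continuousWithinAt)
      (fun u hu => (hf u (hsub (Ioc_subset_Icc_self hu))).hasDerivWithinAt) (fun _ _ => trivial)
      (fun u hu => (hg u (hsub hu)).continuousAt.continuousWithinAt)
      (fun u hu => (hg u (hsub (Ioc_subset_Icc_self hu))).hasDerivWithinAt) (fun _ _ => trivial)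
      heq (left_mem_Icc.2 hle)

/-- The right-hand side of the angle equation `θ' = nilAngleField (y t) (θ t)`. -/
noncomputable def nilAngleField (η u : ℝ) : ℝ := -η * cos u * sin u ^ 2 / (1 + η ^ 2)

lemma nilAngleField_int_mul_pi_div_two (η : ℝ) (k : ℤ) : nilAngleField η (k * π / 2) = 0 := by
  have hsin_mul_cos : sin (k * π / 2) * cos (k * π / 2) = 0 := by
    have h := sin_two_mul (k * π / 2)
    rw [show 2 * (k * π / 2) = k * π by ring, sin_int_mul_pi] at h
    linarith
  rw [nilAngleField, show -η * cos (k * π / 2) * sin (k * π / 2) ^ 2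
    = -η * sin (k * π / 2) * (sin (k * π / 2) * cos (k * π / 2)) by ring, hsin_mul_cos]
  simp

lemma hasDerivAt_nilAngleField (η u : ℝ) :
    HasDerivAt (nilAngleField η)
      (-η * (sin u * (2 * cos u ^ 2 - sin u ^ 2)) / (1 + η ^ 2)) u := by
  refine ((((hasDerivAt_cos u).const_mul (-η)).fun_mul ((hasDerivAt_sin u).fun_pow 2)).div_const
    (1 + η ^ 2)).congr_deriv ?_
  push_cast
  ring

lemma abs_sin_mul_two_mul_cos_sq_sub_sin_sq_le (u : ℝ) :
    |sin u * (2 * cos u ^ 2 - sin u ^ 2)| ≤ 2 := by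
  rw [abs_mul]
  have hsin := abs_sin_le_one u
  have hdiff : |2 * cos u ^ 2 - sin u ^ 2| ≤ 2 := by
    rw [abs_le]
    constructor <;> nlinarith [sin_sq_add_cos_sq u, sq_nonneg (sin u), sq_nonneg (cos u)]
  nlinarith [abs_nonneg (sin u), abs_nonneg (2 * cos u ^ 2 - sin u ^ 2)]

lemma lipschitzWith_nilAngleField (η : ℝ) : LipschitzWith 1 (nilAngleField η) := by
  refine lipschitzOnWith_univ.1 <| convex_univ.lipschitzOnWith_of_nnnorm_hasDerivWithin_le
    (fun u _ => (hasDerivAt_nilAngleField η u).hasDerivWithinAt) fun u _ => ?_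
  rw [← NNReal.coe_le_coe, coe_nnnorm, NNReal.coe_one, Real.norm_eq_abs, abs_div, abs_mul,
    abs_neg, abs_of_pos (by positivity : (0 : ℝ) < 1 + η ^ 2), div_le_one (by positivity)]
  -- `|η| · 2 ≤ 1 + η²`, since `(|η| - 1)² ≥ 0`
  nlinarith [abs_sin_mul_two_mul_cos_sq_sub_sin_sq_le u, abs_nonneg η, sq_abs η,
    sq_nonneg (|η| - 1)]

theorem nil_nonconstant_theta_avoids_half_multiples_of_pi_general
    (I : Set ℝ) (hI : Convex ℝ I) (y θ : ℝ → ℝ)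
    (hθ : ∀ t ∈ I,
      HasDerivAt θ (-(y t) * Real.cos (θ t) * Real.sin (θ t) ^ 2 / (1 + (y t) ^ 2)) t)
    (hnc : ¬ ∀ s ∈ I, ∀ t ∈ I, θ s = θ t) :
    ∀ t ∈ I, ∀ k : ℤ, θ t ≠ k * π / 2 := by
  intro t₀ ht₀ k hk
  have hconst : EqOn θ (fun _ => k * π / 2) I :=
    ODE_solution_unique_of_ordConnected (v := fun t => nilAngleField (y t)) hI.ordConnected
      (fun t _ => lipschitzWith_nilAngleField (y t)) hθ
      (fun t _ => by
        simpa only [nilAngleField_int_mul_pi_div_two] using hasDerivAt_const t (k * π / 2 : ℝ))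
      ht₀ hk
  exact hnc fun s hs t ht => (hconst hs).trans (hconst ht).symm

theorem nil_nonconstant_theta_avoids_half_multiples_of_pi
    (I : Set ℝ) (hI : Convex ℝ I) (x y θ : ℝ → ℝ)
    (hx : ∀ t ∈ I, HasDerivAt x (Real.cos (θ t)) t)
    (hy : ∀ t ∈ I, HasDerivAt y (Real.sin (θ t)) t)
    (hθ : ∀ t ∈ I,
      HasDerivAt θ (-(y t) * Real.cos (θ t) * Real.sin (θ t) ^ 2 / (1 + (y t) ^ 2)) t)
    (hnc : ¬ ∀ s ∈ I, ∀ t ∈ I, θ s = θ t) :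
    ∀ t ∈ I, ∀ k : ℤ, θ t ≠ k * π / 2 :=
  nil_nonconstant_theta_avoids_half_multiples_of_pi_general I hI y θ hθ hnc
end

section
/- Along any solution (x,y,θ) of the system x' = cos θ, y' = sin θ, θ' = −y cos θ sin²θ / (1+y²) with θ(t) ∈ (0, π/2) for all t, the function J(t) = (1 + y(t)²) tan²θ(t) is constant. -/
open Real Set

/- Along a solution, `(1 + y²)' tan² θ = 2 y sin³ θ / cos² θ` and `(1 + y²) (tan² θ)' = -2 y sin³ θ / cos² θ`:
the factor `1 + y²` in the denominator of `θ'` is exactly what makes the two terms cancel. -/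
theorem hasDerivAt_one_add_sq_mul_tan_sq_eq_zero {y θ : ℝ → ℝ} {t : ℝ}
    (hy : HasDerivAt y (sin (θ t)) t)
    (hθ : HasDerivAt θ (-(y t) * cos (θ t) * sin (θ t) ^ 2 / (1 + y t ^ 2)) t)
    (hcos : cos (θ t) ≠ 0) :
    HasDerivAt (fun t => (1 + y t ^ 2) * tan (θ t) ^ 2) 0 t := by
  have hy_sq : HasDerivAt (fun t => 1 + y t ^ 2) (2 * y t * sin (θ t)) t := by
    simpa [mul_comm, mul_assoc] using (hy.pow 2).const_add 1
  have htan_sq : HasDerivAt (fun t => tan (θ t) ^ 2)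
      (2 * tan (θ t) * (1 / cos (θ t) ^ 2 * (-(y t) * cos (θ t) * sin (θ t) ^ 2 / (1 + y t ^ 2)))) t := by
    simpa using ((hasDerivAt_tan hcos).comp t hθ).fun_pow 2
  refine (hy_sq.fun_mul htan_sq).congr_deriv ?_
  have hden : 1 + y t ^ 2 ≠ 0 := by positivity
  rw [tan_eq_sin_div_cos]
  field_simp
  ring

theorem cos_ne_zero_of_mem_Ioo_zero_pi_div_two {θ : ℝ} (hθ : θ ∈ Ioo 0 (π / 2)) : cos θ ≠ 0 :=
  (cos_pos_of_mem_Ioo ⟨by linarith [hθ.1, pi_pos], hθ.2⟩).ne'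

theorem nil_first_integral_general (y θ : ℝ → ℝ)
    (hy : ∀ t, HasDerivAt y (Real.sin (θ t)) t)
    (hθ : ∀ t, HasDerivAt θ (-(y t) * Real.cos (θ t) * Real.sin (θ t) ^ 2 / (1 + (y t) ^ 2)) t)
    (hrange : ∀ t, θ t ∈ Set.Ioo 0 (π / 2)) :
    ∀ s t : ℝ, (1 + (y s) ^ 2) * Real.tan (θ s) ^ 2 = (1 + (y t) ^ 2) * Real.tan (θ t) ^ 2 := by
  have hderiv t := hasDerivAt_one_add_sq_mul_tan_sq_eq_zero (hy t) (hθ t)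
    (cos_ne_zero_of_mem_Ioo_zero_pi_div_two (hrange t))
  exact is_const_of_deriv_eq_zero (fun t => (hderiv t).differentiableAt) (fun t => (hderiv t).deriv)

theorem nil_first_integral (x y θ : ℝ → ℝ)
    (hx : ∀ t, HasDerivAt x (Real.cos (θ t)) t)
    (hy : ∀ t, HasDerivAt y (Real.sin (θ t)) t)
    (hθ : ∀ t, HasDerivAt θ (-(y t) * Real.cos (θ t) * Real.sin (θ t) ^ 2 / (1 + (y t) ^ 2)) t)
    (hrange : ∀ t, θ t ∈ Set.Ioo 0 (π / 2)) :
    ∀ s t : ℝ, (1 + (y s) ^ 2) * Real.tan (θ s) ^ 2 = (1 + (y t) ^ 2) * Real.tan (θ t) ^ 2 :=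
  nil_first_integral_general y θ hy hθ hrange
end

section
/- Let a > 0, c₁ ∈ ℝ, and define y(t) = f⁻¹(√a·t + c₁) where f(t) = (1/2)(1+a) ln(t + √(1+a+t²)) + (1/2) t √(1+a+t²). Then y is differentiable and satisfies the ODE (1 + y(t)²)·y'(t)²/(1 − y'(t)²) = a, i.e. y'(t)² = a/(1 + a + y(t)²). -/
/-!
`f` is the antiderivative of `√(1 + a + t²)`, which is bounded below by `√(1 + a) > 0`; hence
`f` is an increasing bijection of `ℝ` with a differentiable inverse, and the chain rule gives
`y' = √a / √(1 + a + y²)`. Both identities are then algebra.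
-/

open Real Filter Function

section DerivBoundedBelow

variable {f f' : ℝ → ℝ} {m : ℝ}

theorem surjective_of_hasDerivAt_of_le (hf : ∀ x, HasDerivAt f (f' x) x) (hm : 0 < m)
    (hle : ∀ x, m ≤ f' x) : Surjective f := by
  have hdiff : Differentiable ℝ f := fun x => (hf x).differentiableAt
  have hgrowth : ∀ ⦃x y⦄, x ≤ y → m * (y - x) ≤ f y - f x :=
    mul_sub_le_image_sub_of_le_deriv hdiff fun x => (hf x).deriv ▸ hle x
  have htop : Tendsto f atTop atTop := by
    refine tendsto_atTop_mono' _ ?_ (tendsto_atTop_add_const_left _ (f 0)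
      (tendsto_id.const_mul_atTop hm))
    filter_upwards [eventually_ge_atTop 0] with x hx
    have := hgrowth hx
    simp only [id, sub_zero] at this ⊢
    linarith
  have hbot : Tendsto f atBot atBot := by
    refine tendsto_atBot_mono' _ ?_ (tendsto_atBot_add_const_left _ (f 0)
      (tendsto_id.const_mul_atBot hm))
    filter_upwards [eventually_le_atBot 0] with x hx
    have := hgrowth hx
    simp only [id, zero_sub] at this ⊢
    linarith
  exact hdiff.continuous.surjective htop hbot

theorem StrictMono.continuous_invFun (hmono : StrictMono f) (hsurj : Surjective f) :
    Continuous (invFun f) := by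
  have hinv_mono : Monotone (invFun f) := fun x y hxy => by
    rwa [← hmono.le_iff_le, rightInverse_invFun hsurj x, rightInverse_invFun hsurj y]
  exact hinv_mono.continuous_of_surjective fun x =>
    ⟨f x, leftInverse_invFun hmono.injective x⟩

theorem hasDerivAt_invFun_of_le (hf : ∀ x, HasDerivAt f (f' x) x) (hm : 0 < m)
    (hle : ∀ x, m ≤ f' x) (y : ℝ) : HasDerivAt (invFun f) (f' (invFun f y))⁻¹ y := by
  have hsurj := surjective_of_hasDerivAt_of_le hf hm hle
  have hmono : StrictMono f := strictMono_of_hasDerivAt_pos hf fun x => hm.trans_le (hle x)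
  exact (hf _).of_local_left_inverse (hmono.continuous_invFun hsurj).continuousAt
    (hm.trans_le (hle _)).ne' (Eventually.of_forall (rightInverse_invFun hsurj))

end DerivBoundedBelow

section SqrtAddSq

variable {c : ℝ}

noncomputable def sqrtAddSqPrimitive (c : ℝ) (t : ℝ) : ℝ :=
  (1 / 2) * c * log (t + √(c + t ^ 2)) + (1 / 2) * t * √(c + t ^ 2)

theorem add_sqrt_add_sq_pos (hc : 0 < c) (t : ℝ) : 0 < t + √(c + t ^ 2) := by
  have habs : |t| < √(c + t ^ 2) := by
    rw [← sqrt_sq_eq_abs]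
    exact sqrt_lt_sqrt (sq_nonneg t) (by linarith)
  linarith [neg_abs_le t]

theorem hasDerivAt_sqrt_add_sq (hc : 0 < c) (t : ℝ) :
    HasDerivAt (fun u => √(c + u ^ 2)) (t / √(c + t ^ 2)) t := by
  have hsq : HasDerivAt (fun u => c + u ^ 2) (2 * t) t := by
    simpa using (hasDerivAt_pow 2 t).const_add c
  convert hsq.sqrt (by positivity) using 1
  field_simp

theorem hasDerivAt_log_add_sqrt_add_sq (hc : 0 < c) (t : ℝ) :
    HasDerivAt (fun u => log (u + √(c + u ^ 2))) (√(c + t ^ 2))⁻¹ t := by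
  have hpos := add_sqrt_add_sq_pos hc t
  refine (((hasDerivAt_id' t).add (hasDerivAt_sqrt_add_sq hc t)).log hpos.ne').congr_deriv ?_
  simp only [Pi.add_apply]
  field_simp
  ring

theorem hasDerivAt_sqrtAddSqPrimitive (hc : 0 < c) (t : ℝ) :
    HasDerivAt (sqrtAddSqPrimitive c) (√(c + t ^ 2)) t := by
  have hssq : √(c + t ^ 2) ^ 2 = c + t ^ 2 := sq_sqrt (by positivity)
  refine (((hasDerivAt_log_add_sqrt_add_sq hc t).const_mul ((1 / 2) * c)).add
    (((hasDerivAt_id' t).const_mul (1 / 2)).mul (hasDerivAt_sqrt_add_sq hc t))).congr_deriv ?_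
  field_simp
  linear_combination -hssq

end SqrtAddSq

theorem nil_y_solves_ode (a c₁ : ℝ) (ha : 0 < a) :
    let f : ℝ → ℝ := fun t =>
      (1 / 2) * (1 + a) * Real.log (t + Real.sqrt (1 + a + t ^ 2)) +
      (1 / 2) * t * Real.sqrt (1 + a + t ^ 2)
    let y : ℝ → ℝ := fun t => Function.invFun f (Real.sqrt a * t + c₁)
    Differentiable ℝ y ∧
      ∀ t : ℝ,
        (1 + y t ^ 2) * (deriv y t) ^ 2 / (1 - (deriv y t) ^ 2) = a ∧
        (deriv y t) ^ 2 = a / (1 + a + y t ^ 2) := by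
  intro f y
  have hf : ∀ t, HasDerivAt f (√(1 + a + t ^ 2)) t :=
    hasDerivAt_sqrtAddSqPrimitive (by linarith)
  have hy : ∀ t, HasDerivAt y ((√(1 + a + y t ^ 2))⁻¹ * √a) t := fun t =>
    (hasDerivAt_invFun_of_le hf (m := √(1 + a)) (sqrt_pos.2 (by linarith))
      (fun s => sqrt_le_sqrt (by nlinarith)) _).comp t
      (((hasDerivAt_id t).const_mul √a).add_const c₁ |>.congr_deriv (mul_one _))
  refine ⟨fun t => (hy t).differentiableAt, fun t => ?_⟩
  have hD : 0 < 1 + a + y t ^ 2 := by positivity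
  have hderiv_sq : deriv y t ^ 2 = a / (1 + a + y t ^ 2) := by
    rw [(hy t).deriv, mul_pow, inv_pow, sq_sqrt hD.le, sq_sqrt ha.le]
    ring
  refine ⟨?_, hderiv_sq⟩
  have hone_sub : 1 - deriv y t ^ 2 = (1 + y t ^ 2) / (1 + a + y t ^ 2) := by
    rw [hderiv_sq]
    field_simp
    ring
  rw [hone_sub, hderiv_sq]
  field_simp
end

section
/- For every c ≥ 1, and all x, y, θ ∈ ℝ: |[1+c² + (1−c²)cos(2θ)]·(x sin θ − c² y cos θ)| / (2(c² + x² + c⁴y²)) ≤ c/2. In particular the right-hand side of the ODE θ' = [1+c²+(1−c²)cos(2θ)](x sin θ − c² y cos θ)/(2(c²+x²+c⁴y²)) is bounded by c/2. -/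
/-!
The factor `1 + c² + (1 - c²) cos 2θ` lies between `2` and `2c²`. By Cauchy–Schwarz,
`|x sin θ - c² y cos θ| ≤ √s` with `s = x² + c⁴y²`, and by AM–GM `2c√s ≤ c² + s`. Multiplying
the two bounds gives `c/2`.
-/

open Real

lemma abs_one_add_add_one_sub_mul_le {a u : ℝ} (ha : 1 ≤ a) (hu : |u| ≤ 1) :
    |1 + a + (1 - a) * u| ≤ 2 * a := by
  obtain ⟨hu₁, hu₂⟩ := abs_le.mp hu
  rw [abs_le]
  constructor <;> nlinarith

lemma sq_mul_sin_sub_mul_cos_le (x b θ : ℝ) :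
    (x * sin θ - b * cos θ) ^ 2 ≤ x ^ 2 + b ^ 2 := by
  nlinarith [sin_sq_add_cos_sq θ, sq_nonneg (x * cos θ + b * sin θ)]

lemma abs_div_sq_add_le_inv_two_mul {c s t : ℝ} (hc : 0 < c) (ht : t ^ 2 ≤ s) :
    |t| / (c ^ 2 + s) ≤ 1 / (2 * c) := by
  have am_gm : 2 * c * |t| ≤ c ^ 2 + t ^ 2 := by
    simpa [sq_abs, mul_assoc] using two_mul_le_add_sq c |t|
  rw [div_le_div_iff₀ (add_pos_of_pos_of_nonneg (by positivity) ((sq_nonneg t).trans ht))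
    (by positivity)]
  linarith

theorem theta_deriv_bound_E2c (c : ℝ) (hc : 1 ≤ c) (x y θ : ℝ) :
    |(1 + c ^ 2 + (1 - c ^ 2) * Real.cos (2 * θ)) * (x * Real.sin θ - c ^ 2 * y * Real.cos θ)| /
      (2 * (c ^ 2 + x ^ 2 + c ^ 4 * y ^ 2)) ≤ c / 2 := by
  have hc₀ : 0 < c := by linarith
  have hA := abs_one_add_add_one_sub_mul_le (one_le_pow₀ hc : 1 ≤ c ^ 2) (abs_cos_le_one (2 * θ))
  have hB : (x * sin θ - c ^ 2 * y * cos θ) ^ 2 ≤ x ^ 2 + c ^ 4 * y ^ 2 := by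
    convert sq_mul_sin_sub_mul_cos_le x (c ^ 2 * y) θ using 2; ring
  have hBD : |x * sin θ - c ^ 2 * y * cos θ| / (c ^ 2 + x ^ 2 + c ^ 4 * y ^ 2) ≤ 1 / (2 * c) := by
    rw [add_assoc]; exact abs_div_sq_add_le_inv_two_mul hc₀ hB
  calc _ = |1 + c ^ 2 + (1 - c ^ 2) * cos (2 * θ)|
          * (|x * sin θ - c ^ 2 * y * cos θ| / (c ^ 2 + x ^ 2 + c ^ 4 * y ^ 2)) / 2 := by
        rw [abs_mul, mul_div_assoc, mul_div_assoc, div_mul_eq_div_div_swap]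
    _ ≤ 2 * c ^ 2 * (1 / (2 * c)) / 2 := by gcongr
    _ = c / 2 := by field_simp
end

section
/- Let (x,y,θ) solve x' = cos θ, y' = sin θ, (y cos θ − x sin θ)θ' = −1 with initial data (x₀,y₀,θ₀), and set a = 2(x₀cos θ₀ + y₀sin θ₀). If a ≠ 0, then the maximal interval of definition of the solution is contained in [−(x₀²+y₀²)/a, ∞) if a > 0, and in (−∞, −(x₀²+y₀²)/a] if a < 0; in particular, no solution with a ≠ 0 is defined on all of ℝ. -/
/-!
Differentiating along a solution, `x cos θ + y sin θ` has derivative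
`cos² θ + sin² θ + (y cos θ - x sin θ) θ' = 1 - 1 = 0`, so it keeps its initial value `a / 2`.
Hence `x² + y²`, whose derivative is `2 (x cos θ + y sin θ) = a`, equals `a t + x₀² + y₀²`;
nonnegativity of the left side confines `t` to a half-line.
-/

open Real Set

theorem Convex.eq_of_forall_hasDerivAt_zero {E : Type*} [NormedAddCommGroup E]
    [NormedSpace ℝ E] {s : Set ℝ} (hs : Convex ℝ s) {f : ℝ → E}
    (hf : ∀ t ∈ s, HasDerivAt f 0 t) {u v : ℝ} (hu : u ∈ s) (hv : v ∈ s) : f u = f v := by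
  have h := hs.norm_image_sub_le_of_norm_hasDerivWithin_le
    (fun t ht => (hf t ht).hasDerivWithinAt) (fun _ _ => norm_zero.le) hv hu
  simpa [sub_eq_zero] using h

section PlaneCurve

variable {x y θ : ℝ → ℝ} {t : ℝ}

theorem hasDerivAt_mul_cos_add_mul_sin {θ't : ℝ}
    (hx : HasDerivAt x (cos (θ t)) t) (hy : HasDerivAt y (sin (θ t)) t)
    (hθ : HasDerivAt θ θ't t) (hK : (y t * cos (θ t) - x t * sin (θ t)) * θ't = -1) :
    HasDerivAt (fun s => x s * cos (θ s) + y s * sin (θ s)) 0 t :=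
  ((hx.mul hθ.cos).add (hy.mul hθ.sin)).congr_deriv <| by
    linear_combination hK + sin_sq_add_cos_sq (θ t)

theorem hasDerivAt_sq_add_sq (hx : HasDerivAt x (cos (θ t)) t)
    (hy : HasDerivAt y (sin (θ t)) t) :
    HasDerivAt (fun s => x s ^ 2 + y s ^ 2) (2 * (x t * cos (θ t) + y t * sin (θ t))) t :=
  ((hx.pow 2).add (hy.pow 2)).congr_deriv <| by
    norm_num
    ring

end PlaneCurve

theorem neg_div_le_of_mul_add_nonneg {a c t : ℝ} (ha : 0 < a) (h : 0 ≤ a * t + c) :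
    -c / a ≤ t := by
  rw [div_le_iff₀ ha]
  linarith

theorem le_neg_div_of_mul_add_nonneg {a c t : ℝ} (ha : a < 0) (h : 0 ≤ a * t + c) :
    t ≤ -c / a := by
  rw [le_div_iff_of_neg ha]
  linarith

theorem exists_mul_add_neg {a : ℝ} (ha : a ≠ 0) (c : ℝ) : ∃ t, a * t + c < 0 :=
  ⟨-(c + 1) / a, by field_simp; linarith⟩

/-- Any interval of definition of a solution of the zero-Gaussian-curvature system in flat
Ẽ(2) with a = 2(x₀cos θ₀ + y₀sin θ₀) ≠ 0 is contained in the stated half-line; in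
particular no such solution is defined on all of ℝ. -/
theorem flat_E2_not_complete (I : Set ℝ) (hI : Convex ℝ I) (h0 : (0 : ℝ) ∈ I)
    (x y θ θ' : ℝ → ℝ) (x₀ y₀ θ₀ a : ℝ)
    (hx0 : x 0 = x₀) (hy0 : y 0 = y₀) (hθ0 : θ 0 = θ₀)
    (ha : a = 2 * (x₀ * Real.cos θ₀ + y₀ * Real.sin θ₀)) (hane : a ≠ 0)
    (hx : ∀ t ∈ I, HasDerivAt x (Real.cos (θ t)) t)
    (hy : ∀ t ∈ I, HasDerivAt y (Real.sin (θ t)) t)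
    (hθ : ∀ t ∈ I, HasDerivAt θ (θ' t) t)
    (hK : ∀ t ∈ I, (y t * Real.cos (θ t) - x t * Real.sin (θ t)) * θ' t = -1) :
    ((0 < a → I ⊆ Set.Ici (-(x₀ ^ 2 + y₀ ^ 2) / a)) ∧
     (a < 0 → I ⊆ Set.Iic (-(x₀ ^ 2 + y₀ ^ 2) / a))) ∧
    I ≠ Set.univ := by
  have hradial : ∀ t ∈ I, 2 * (x t * cos (θ t) + y t * sin (θ t)) = a := fun t ht => by
    rw [hI.eq_of_forall_hasDerivAt_zero (fun s hs => hasDerivAt_mul_cos_add_mul_sin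
      (hx s hs) (hy s hs) (hθ s hs) (hK s hs)) ht h0, hx0, hy0, hθ0, ha]
  have hnormSq : ∀ t ∈ I, x t ^ 2 + y t ^ 2 - a * t = x₀ ^ 2 + y₀ ^ 2 := fun t ht => by
    have hderiv : ∀ s ∈ I, HasDerivAt (fun s => x s ^ 2 + y s ^ 2 - a * s) 0 s := fun s hs =>
      ((hasDerivAt_sq_add_sq (hx s hs) (hy s hs)).sub
        ((hasDerivAt_id' s).const_mul a)).congr_deriv (by rw [hradial s hs]; ring)
    simpa [hx0, hy0] using hI.eq_of_forall_hasDerivAt_zero hderiv ht h0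
  have hnonneg : ∀ t ∈ I, 0 ≤ a * t + (x₀ ^ 2 + y₀ ^ 2) := fun t ht => by
    rw [← hnormSq t ht]
    linarith [sq_nonneg (x t), sq_nonneg (y t)]
  refine ⟨⟨fun hapos t ht => neg_div_le_of_mul_add_nonneg hapos (hnonneg t ht),
    fun haneg t ht => le_neg_div_of_mul_add_nonneg haneg (hnonneg t ht)⟩, fun hIuniv => ?_⟩
  obtain ⟨t, hneg⟩ := exists_mul_add_neg hane (x₀ ^ 2 + y₀ ^ 2)
  exact hneg.not_ge (hnonneg t (hIuniv ▸ mem_univ t))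
end
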